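/- For the one-toss game (n=1): with a_0 = 1/4, a_1 = 3/4, the penalty function f(p) = (1-p)|p - 1/4| + p|p - 3/4| satisfies f(p) \le 1/4 for all p in [0,1], with equality at p = 0, 1/2, 1. -/

import Mathlib

/-!
On `[0, 1/4]` and `[3/4, 1]` the penalty is affine, equal to `1/4 - p/2` and `p/2 - 1/4`
respectively, while on `[1/4, 3/4]` it is the parabola `1/4 - 2 (p - 1/2)^2`. Each piece is
at most `1/4`, with equality exactly at `p = 0`, `1/2` and `1`.
-/

/-- The paper's `D(a₀, a₁; p)`. -/
def penalty (a₀ a₁ p : ℝ) : ℝ := (1 - p) * |p - a₀| + p * |p - a₁|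

theorem penalty_le_quarter {p : ℝ} (h0 : 0 ≤ p) (h1 : p ≤ 1) :
    penalty (1/4) (3/4) p ≤ 1/4 := by
  unfold penalty
  rcases le_total p (1/4) with hp | hp
  · rw [abs_of_nonpos (by linarith), abs_of_nonpos (by linarith)]
    calc (1 - p) * -(p - 1/4) + p * -(p - 3/4) = 1/4 - p/2 := by ring
      _ ≤ 1/4 := by linarith
  rcases le_total p (3/4) with hq | hq
  · rw [abs_of_nonneg (by linarith), abs_of_nonpos (by linarith)]
    calc (1 - p) * (p - 1/4) + p * -(p - 3/4) = 1/4 - 2 * (p - 1/2) ^ 2 := by ring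
      _ ≤ 1/4 := by linarith [sq_nonneg (p - 1/2)]
  · rw [abs_of_nonneg (by linarith), abs_of_nonneg (by linarith)]
    calc (1 - p) * (p - 1/4) + p * (p - 3/4) = p/2 - 1/4 := by ring
      _ ≤ 1/4 := by linarith

theorem stmt_13 :
    (∀ p ∈ Set.Icc (0:ℝ) 1, (1 - p) * |p - 1/4| + p * |p - 3/4| ≤ 1/4) ∧
    ((1 - (0:ℝ)) * |(0:ℝ) - 1/4| + 0 * |(0:ℝ) - 3/4| = 1/4) ∧
    ((1 - (1/2:ℝ)) * |(1/2:ℝ) - 1/4| + (1/2) * |(1/2:ℝ) - 3/4| = 1/4) ∧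
    ((1 - (1:ℝ)) * |(1:ℝ) - 1/4| + 1 * |(1:ℝ) - 3/4| = 1/4) := by
  refine ⟨fun p hp => penalty_le_quarter hp.1 hp.2, ?_, ?_, ?_⟩ <;>
    norm_num [abs_of_nonneg, abs_of_nonpos]
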